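/- If u is an odd positive integer, then 𝒩(u) = 𝒩(2u), where 𝒩(u) denotes the number of full-rank well-rounded sublattices of ℤ² with determinant equal to u. -/

import Mathlib

/-- The standard inner product of two vectors in `ℤ²`. -/
def dot2 (x y : Fin 2 → ℤ) : ℤ := x 0 * y 0 + x 1 * y 1

/-- The squared Euclidean norm of a vector in `ℤ²`. -/
def normSq2 (x : Fin 2 → ℤ) : ℤ := x 0 ^ 2 + x 1 ^ 2

/-- The determinant of the pair of vectors `x`, `y` in `ℤ²`. -/
def det2 (x y : Fin 2 → ℤ) : ℤ := x 0 * y 1 - x 1 * y 0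

/-- A sublattice of `ℤ²` is full-rank (rank 2) if it contains two linearly
independent vectors, i.e. its elements span `ℝ²`. -/
def IsFullRank (L : AddSubgroup (Fin 2 → ℤ)) : Prop :=
  ∃ x ∈ L, ∃ y ∈ L, det2 x y ≠ 0

/-- `x` is a minimal vector of the lattice `L`: it is a nonzero vector of `L` of
least Euclidean norm, i.e. `‖x‖ = |L|`. -/
def IsMinVec (L : AddSubgroup (Fin 2 → ℤ)) (x : Fin 2 → ℤ) : Prop :=
  x ∈ L ∧ x ≠ 0 ∧ ∀ y ∈ L, y ≠ 0 → normSq2 x ≤ normSq2 y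

/-- `L` is well-rounded: its minimal vectors span `ℝ²`, i.e. there exist two
linearly independent minimal vectors. -/
def IsWellRounded (L : AddSubgroup (Fin 2 → ℤ)) : Prop :=
  ∃ x y, IsMinVec L x ∧ IsMinVec L y ∧ det2 x y ≠ 0

/-- The sublattice of `ℤ²` spanned over `ℤ` by the vectors `v` and `w`. -/
def latticeOf (v w : Fin 2 → ℤ) : AddSubgroup (Fin 2 → ℤ) :=
  AddSubgroup.closure {v, w}

-- membership in latticeOf
lemma mem_latticeOf {x y v : Fin 2 → ℤ} :
    v ∈ latticeOf x y ↔ ∃ s t : ℤ, v = s • x + t • y := by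
  constructor
  · intro hv
    induction hv using AddSubgroup.closure_induction with
    | mem w hw =>
        rcases hw with h | h
        · exact ⟨1, 0, by simp [h]⟩
        · exact ⟨0, 1, by simp [Set.mem_singleton_iff.mp h]⟩
    | zero => exact ⟨0, 0, by simp⟩
    | add a b _ _ ha hb =>
        rcases ha with ⟨s, t, rfl⟩; rcases hb with ⟨s', t', rfl⟩
        exact ⟨s + s', t + t', by module⟩
    | neg a _ ha =>
        rcases ha with ⟨s, t, rfl⟩
        exact ⟨-s, -t, by module⟩
  · rintro ⟨s, t, rfl⟩
    exact AddSubgroup.add_mem _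
      (AddSubgroup.zsmul_mem _ (AddSubgroup.subset_closure (by simp)) s)
      (AddSubgroup.zsmul_mem _ (AddSubgroup.subset_closure (by simp)) t)

-- division with small nonneg remainder
lemma div_small_rem (a b : ℤ) (hb : b ≠ 0) :
    ∃ q r : ℤ, a = b * q + r ∧ 0 ≤ r ∧ r < (b.natAbs : ℤ) := by
  set n : ℤ := (b.natAbs : ℤ) with hn
  have hB : (0:ℤ) < n := by
    have := Int.natAbs_pos.mpr hb; rw [hn]; exact_mod_cast this
  have h1 : a = n * (a / n) + a % n := (Int.mul_ediv_add_emod a _).symm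
  have h2 : 0 ≤ a % n := Int.emod_nonneg a (ne_of_gt hB)
  have h3 : a % n < n := Int.emod_lt_of_pos a hB
  rcases Int.natAbs_eq b with he | he
  · refine ⟨a / n, a % n, ?_, h2, h3⟩
    rw [← hn] at he; rw [he]; exact h1
  · refine ⟨-(a / n), a % n, ?_, h2, h3⟩
    rw [← hn] at he
    have : b * -(a / n) = n * (a / n) := by rw [he]; ring
    rw [this]; exact h1

-- centered remainder
lemma div_centered_rem (a b : ℤ) (hb : b ≠ 0) :
    ∃ q r : ℤ, a = b * q + r ∧ 2 * r.natAbs ≤ b.natAbs := by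
  obtain ⟨q, r, h1, h2, h3⟩ := div_small_rem a b hb
  by_cases hc : 2 * r ≤ (b.natAbs : ℤ)
  · exact ⟨q, r, h1, by omega⟩
  · rcases Int.natAbs_eq b with he | he
    · refine ⟨q + 1, r - b, by linarith [h1], ?_⟩
      have : (r - b).natAbs = b.natAbs - r.natAbs := by omega
      omega
    · refine ⟨q - 1, r + b, by linarith [h1], ?_⟩
      have : (r + b).natAbs = b.natAbs - r.natAbs := by omega
      omega
set_option maxRecDepth 10000 in
lemma zmod8_key : ∀ A B C D : ZMod 8, A^2+B^2 = C^2+D^2 →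
    (A^2+B^2 = 1 ∨ A^2+B^2 = 3 ∨ A^2+B^2 = 5 ∨ A^2+B^2 = 7) →
    (A*D - B*C ≠ 2 ∧ A*D - B*C ≠ 6) := by decide

lemma parity_lemma {a b c d : ℤ} (h : a^2+b^2 = c^2+d^2) (hodd : Odd (a^2+b^2)) :
    ¬ ∃ k : ℤ, a*d - b*c = 4*k + 2 := by
  rintro ⟨k, hk⟩
  obtain ⟨j, hj⟩ := hodd
  have h8 : (a:ZMod 8)^2+(b:ZMod 8)^2 = (c:ZMod 8)^2+(d:ZMod 8)^2 := by
    have := congrArg (fun z : ℤ => (z : ZMod 8)) h; push_cast at this; exact this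
  have hodd8 : (a:ZMod 8)^2+(b:ZMod 8)^2 = 2*(j:ZMod 8)+1 := by
    have := congrArg (fun z : ℤ => (z : ZMod 8)) hj; push_cast at this; exact this
  have hk8 : (a:ZMod 8)*(d:ZMod 8) - (b:ZMod 8)*(c:ZMod 8) = 4*(k:ZMod 8)+2 := by
    have := congrArg (fun z : ℤ => (z : ZMod 8)) hk; push_cast at this; exact this
  have h2j : ∀ J : ZMod 8, 2*J+1 = 1 ∨ 2*J+1 = 3 ∨ 2*J+1 = 5 ∨ 2*J+1 = 7 := by decide
  have h4k : ∀ K : ZMod 8, 4*K+2 = 2 ∨ 4*K+2 = 6 := by decide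
  have key := zmod8_key (a:ZMod 8) b c d h8 (by rw [hodd8]; exact h2j _)
  rcases h4k (k : ZMod 8) with h' | h' <;> rw [hk8, h'] at key
  · exact key.1 rfl
  · exact key.2 rfl


-- basic identities
lemma smul_apply0 (s : ℤ) (x : Fin 2 → ℤ) : (s • x) 0 = s * x 0 := rfl
lemma smul_apply1 (s : ℤ) (x : Fin 2 → ℤ) : (s • x) 1 = s * x 1 := rfl

lemma normSq2_combo (s t : ℤ) (x y : Fin 2 → ℤ) :
    normSq2 (s • x + t • y)
      = s^2 * normSq2 x + 2*s*t*(dot2 x y) + t^2 * normSq2 y := by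
  simp only [normSq2, dot2, Pi.add_apply, smul_apply0, smul_apply1]
  ring

lemma normSq2_smul (s : ℤ) (x : Fin 2 → ℤ) : normSq2 (s • x) = s^2 * normSq2 x := by
  simp only [normSq2, smul_apply0, smul_apply1]; ring

lemma normSq2_pos {x : Fin 2 → ℤ} (hx : x ≠ 0) : 0 < normSq2 x := by
  have : x 0 ≠ 0 ∨ x 1 ≠ 0 := by
    by_contra h
    push_neg at h
    apply hx
    funext i
    fin_cases i <;> simp [h.1, h.2]
  rcases this with h | h
  · have h1 := sq_nonneg (x 1); have h2 : 0 < x 0 ^ 2 := by positivity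
    unfold normSq2; omega
  · have h1 := sq_nonneg (x 0); have h2 : 0 < x 1 ^ 2 := by positivity
    unfold normSq2; omega

lemma cramer_id (x y v : Fin 2 → ℤ) :
    (det2 x y) • v = (det2 v y) • x + (det2 x v) • y := by
  funext i
  fin_cases i <;>
    · simp only [det2, Pi.add_apply, Pi.smul_apply, smul_eq_mul, Fin.isValue, Fin.mk_zero, Fin.mk_one]
      ring

lemma det2_self (x : Fin 2 → ℤ) : det2 x x = 0 := by unfold det2; ring

lemma det2_neg_right (x y : Fin 2 → ℤ) : det2 x (-y) = - det2 x y := by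
  unfold det2; simp only [Pi.neg_apply]; ring

lemma minvec_normSq_eq {L : AddSubgroup (Fin 2 → ℤ)} {x y : Fin 2 → ℤ}
    (hx : IsMinVec L x) (hy : IsMinVec L y) : normSq2 x = normSq2 y :=
  le_antisymm (hx.2.2 y hy.1 hy.2.1) (hy.2.2 x hx.1 hx.2.1)

lemma dot_bound {L : AddSubgroup (Fin 2 → ℤ)} {x y : Fin 2 → ℤ}
    (hx : IsMinVec L x) (hy : IsMinVec L y) (hd : det2 x y ≠ 0) :
    -(normSq2 x) ≤ 2 * dot2 x y ∧ 2 * dot2 x y ≤ normSq2 x := by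
  have hm := minvec_normSq_eq hx hy
  have hsub : x - y ∈ L := sub_mem hx.1 hy.1
  have hadd : x + y ∈ L := add_mem hx.1 hy.1
  have hsub0 : x - y ≠ 0 := by
    intro h
    have : x = y := by rwa [sub_eq_zero] at h
    rw [this, det2_self] at hd; exact hd rfl
  have hadd0 : x + y ≠ 0 := by
    intro h
    have : y = -x := by linear_combination (norm := module) h
    rw [this, det2_neg_right, det2_self] at hd; simp at hd
  have e1 : normSq2 (x - y) = normSq2 x + normSq2 y - 2 * dot2 x y := by
    have : x - y = (1:ℤ) • x + (-1:ℤ) • y := by module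
    rw [this, normSq2_combo]; ring
  have e2 : normSq2 (x + y) = normSq2 x + normSq2 y + 2 * dot2 x y := by
    have : x + y = (1:ℤ) • x + (1:ℤ) • y := by module
    rw [this, normSq2_combo]; ring
  have m1 := hx.2.2 _ hsub hsub0
  have m2 := hx.2.2 _ hadd hadd0
  constructor <;> omega

lemma minvec_generate {L : AddSubgroup (Fin 2 → ℤ)} {x y : Fin 2 → ℤ}
    (hx : IsMinVec L x) (hy : IsMinVec L y) (hd : det2 x y ≠ 0) :
    L = latticeOf x y := by
  refine le_antisymm ?_ ((AddSubgroup.closure_le L).mpr ?_)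
  swap
  · rintro v (h | h)
    · rw [h]; exact hx.1
    · rw [Set.mem_singleton_iff] at h; rw [h]; exact hy.1
  intro v hv
  have hmy : normSq2 y = normSq2 x := (minvec_normSq_eq hx hy).symm
  have hmpos : 0 < normSq2 x := normSq2_pos hx.2.1
  obtain ⟨s, r, hp, hr⟩ := div_centered_rem (det2 v y) (det2 x y) hd
  obtain ⟨t, r', hq, hr'⟩ := div_centered_rem (det2 x v) (det2 x y) hd
  have hv'L : v - s • x - t • y ∈ L :=
    sub_mem (sub_mem hv (AddSubgroup.zsmul_mem _ hx.1 s)) (AddSubgroup.zsmul_mem _ hy.1 t)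
  have hDv' : (det2 x y) • (v - s • x - t • y) = r • x + r' • y := by
    have hc : (det2 x y) • v = (det2 x y * s + r) • x + (det2 x y * t + r') • y := by
      rw [← hp, ← hq]; exact cramer_id x y v
    have expand : (det2 x y) • (v - s • x - t • y)
        = (det2 x y) • v - (det2 x y * s) • x - (det2 x y * t) • y := by module
    rw [expand, hc]; module
  have hnorm : (det2 x y)^2 * normSq2 (v - s • x - t • y)
      = r^2 * normSq2 x + 2*r*r'*(dot2 x y) + r'^2 * normSq2 x := by
    rw [← normSq2_smul, hDv', normSq2_combo, hmy]
  obtain ⟨hdb1, hdb2⟩ := dot_bound hx hy hd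
  -- bound the cross term
  have habs : 8 * |r * r' * dot2 x y| ≤ (det2 x y)^2 * normSq2 x := by
    have h1 : (2:ℤ) * |r| ≤ |det2 x y| := by
      rw [Int.abs_eq_natAbs, Int.abs_eq_natAbs]; exact_mod_cast by omega
    have h2 : (2:ℤ) * |r'| ≤ |det2 x y| := by
      rw [Int.abs_eq_natAbs, Int.abs_eq_natAbs]; exact_mod_cast by omega
    have h3 : (2:ℤ) * |dot2 x y| ≤ normSq2 x := by
      rcases abs_cases (dot2 x y) with ⟨h, _⟩ | ⟨h, _⟩ <;> omega
    have e : (8:ℤ) * |r * r' * dot2 x y| = (2*|r|) * (2*|r'|) * (2*|dot2 x y|) := by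
      rw [abs_mul, abs_mul]; ring
    rw [e]
    have h4 : (2*|r|) * (2*|r'|) ≤ |det2 x y| * |det2 x y| :=
      mul_le_mul h1 h2 (by positivity) (abs_nonneg _)
    calc (2*|r|) * (2*|r'|) * (2*|dot2 x y|)
        ≤ (|det2 x y| * |det2 x y|) * (2*|dot2 x y|) := by
          exact mul_le_mul_of_nonneg_right h4 (by positivity)
      _ ≤ (|det2 x y| * |det2 x y|) * normSq2 x := by
          exact mul_le_mul_of_nonneg_left h3 (by positivity)
      _ = (det2 x y)^2 * normSq2 x := by rw [← abs_mul, abs_mul_self]; ring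
  have hr2 : 4 * r^2 ≤ (det2 x y)^2 := by
    have h1 : (2:ℤ) * |r| ≤ |det2 x y| := by
      rw [Int.abs_eq_natAbs, Int.abs_eq_natAbs]; exact_mod_cast by omega
    nlinarith [sq_abs r, sq_abs (det2 x y), abs_nonneg r, abs_nonneg (det2 x y)]
  have hr'2 : 4 * r'^2 ≤ (det2 x y)^2 := by
    have h1 : (2:ℤ) * |r'| ≤ |det2 x y| := by
      rw [Int.abs_eq_natAbs, Int.abs_eq_natAbs]; exact_mod_cast by omega
    nlinarith [sq_abs r', sq_abs (det2 x y), abs_nonneg r', abs_nonneg (det2 x y)]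
  have hlt : normSq2 (v - s • x - t • y) < normSq2 x := by
    have hD2 : 0 < (det2 x y)^2 := by positivity
    have hcross : 8 * (r*r'*dot2 x y) ≤ (det2 x y)^2 * normSq2 x :=
      le_trans (by have := le_abs_self (r*r'*dot2 x y); omega) habs
    have hle : 4 * ((det2 x y)^2 * normSq2 (v - s • x - t • y))
        ≤ 3 * ((det2 x y)^2 * normSq2 x) := by nlinarith [hnorm]
    nlinarith
  have hv'0 : v - s • x - t • y = 0 := by
    by_contra h
    exact absurd (hx.2.2 _ hv'L h) (by omega)
  rw [sub_sub] at hv'0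
  exact mem_latticeOf.mpr ⟨s, t, sub_eq_zero.mp hv'0⟩

-- general hom to ZMod
def lmod (n : ℕ) (α β : ℤ) : (Fin 2 → ℤ) →+ ZMod n where
  toFun v := ((α * v 0 + β * v 1 : ℤ) : ZMod n)
  map_zero' := by simp
  map_add' a b := by
    simp only [Pi.add_apply]
    push_cast
    ring

lemma lmod_ker_index (n : ℕ) (α β : ℤ) (hsurj : Function.Surjective (lmod n α β)) :
    (lmod n α β).ker.index = n := by
  rw [AddSubgroup.index_ker, AddMonoidHom.range_eq_top.mpr hsurj]
  rw [Nat.card_congr AddSubgroup.topEquiv.toEquiv, Nat.card_zmod]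

lemma lmod_surj_left (n : ℕ) (β : ℤ) : Function.Surjective (lmod n 1 β) := by
  intro z
  obtain ⟨z', hz'⟩ := ZMod.intCast_surjective (n := n) z
  exact ⟨![z', 0], by simp [lmod, hz']⟩

lemma lmod_surj_right (n : ℕ) : Function.Surjective (lmod n 0 1) := by
  intro z
  obtain ⟨z', hz'⟩ := ZMod.intCast_surjective (n := n) z
  exact ⟨![0, z'], by simp [lmod, hz']⟩

lemma latticeOf_map (f : (Fin 2 → ℤ) →+ (Fin 2 → ℤ)) (x y : Fin 2 → ℤ) :
    (latticeOf x y).map f = latticeOf (f x) (f y) := by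
  unfold latticeOf
  rw [AddMonoidHom.map_closure, Set.image_pair]

lemma index_map_addequiv (e : (Fin 2 → ℤ) ≃+ (Fin 2 → ℤ)) (H : AddSubgroup (Fin 2 → ℤ)) :
    (H.map e.toAddMonoidHom).index = H.index := by
  rw [AddSubgroup.index_map_of_injective H e.injective]
  have : (e.toAddMonoidHom).range = ⊤ := by
    rw [AddMonoidHom.range_eq_top]; exact e.surjective
  rw [this, AddSubgroup.index_top, mul_one]

lemma index_triangular (x y : Fin 2 → ℤ) (h0 : x 1 = 0) (hd : det2 x y ≠ 0) :
    (latticeOf x y).index = (det2 x y).natAbs := by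
  have hdet : det2 x y = x 0 * y 1 := by unfold det2; rw [h0]; ring
  have hg : x 0 ≠ 0 := fun h => hd (by rw [hdet, h, zero_mul])
  have hdne : y 1 ≠ 0 := fun h => hd (by rw [hdet, h, mul_zero])
  -- ψ : v ↦ ![v 0, y 1 * v 1]
  set ψ : (Fin 2 → ℤ) →+ (Fin 2 → ℤ) :=
    { toFun := fun v => ![v 0, y 1 * v 1]
      map_zero' := by funext i; fin_cases i <;> simp
      map_add' := fun a b => by
        funext i; fin_cases i <;> simp [Pi.add_apply] <;> ring } with hψ
  have hψinj : Function.Injective ψ := by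
    intro a b hab
    funext i
    have h0' := congrFun hab 0
    have h1' := congrFun hab 1
    simp [hψ] at h0' h1'
    fin_cases i
    · exact h0'
    · exact h1'.resolve_right hdne
  have him : latticeOf x y = (latticeOf ![x 0, 0] ![y 0, 1]).map ψ := by
    rw [latticeOf_map]
    congr 1
    · funext i; fin_cases i <;> simp [hψ, h0]
    · funext i; fin_cases i <;> simp [hψ]
  -- inner lattice is kernel of lmod (x 0).natAbs 1 (-(y 0))
  have hker : latticeOf ![x 0, 0] ![y 0, 1] = (lmod (x 0).natAbs 1 (-(y 0))).ker := by
    ext v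
    rw [mem_latticeOf, AddMonoidHom.mem_ker]
    have hval : lmod (x 0).natAbs 1 (-(y 0)) v = ((v 0 - y 0 * v 1 : ℤ) : ZMod (x 0).natAbs) := by
      show ((1 * v 0 + (-(y 0)) * v 1 : ℤ) : ZMod (x 0).natAbs) = _
      congr 1; ring
    rw [hval, ZMod.intCast_zmod_eq_zero_iff_dvd, Int.natAbs_dvd]
    constructor
    · rintro ⟨s, t, rfl⟩
      refine ⟨s, ?_⟩
      simp only [Pi.add_apply, smul_apply0, smul_apply1]
      simp
      ring
    · rintro ⟨s, hs⟩
      refine ⟨s, v 1, ?_⟩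
      funext i; fin_cases i
      · simp only [Pi.add_apply, smul_apply0]
        simp
        linarith [hs]
      · simp only [Pi.add_apply, smul_apply1]
        simp
  -- range of ψ is kernel of lmod (y 1).natAbs 0 1
  have hrange : ψ.range = (lmod (y 1).natAbs 0 1).ker := by
    ext v
    rw [AddMonoidHom.mem_range, AddMonoidHom.mem_ker]
    have hval : lmod (y 1).natAbs 0 1 v = ((v 1 : ℤ) : ZMod (y 1).natAbs) := by
      show ((0 * v 0 + 1 * v 1 : ℤ) : ZMod (y 1).natAbs) = _
      congr 1; ring
    rw [hval, ZMod.intCast_zmod_eq_zero_iff_dvd, Int.natAbs_dvd]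
    constructor
    · rintro ⟨w, rfl⟩
      exact ⟨w 1, by simp [hψ]⟩
    · rintro ⟨c, hc⟩
      refine ⟨![v 0, c], ?_⟩
      funext i; fin_cases i <;> simp [hψ]
      omega
  rw [him, AddSubgroup.index_map_of_injective _ hψinj, hker,
    lmod_ker_index _ _ _ (lmod_surj_left _ _), hrange,
    lmod_ker_index _ _ _ (lmod_surj_right _), hdet, Int.natAbs_mul]

def euclidEquiv (q : ℤ) : (Fin 2 → ℤ) ≃+ (Fin 2 → ℤ) where
  toFun v := ![v 1, v 0 - q * v 1]
  invFun w := ![w 1 + q * w 0, w 0]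
  left_inv v := by funext i; fin_cases i <;> simp <;> ring
  right_inv w := by funext i; fin_cases i <;> simp
  map_add' a b := by funext i; fin_cases i <;> simp [Pi.add_apply] <;> ring

lemma euclidEquiv_det (q : ℤ) (x y : Fin 2 → ℤ) :
    det2 (euclidEquiv q x) (euclidEquiv q y) = - det2 x y := by
  show det2 ![x 1, x 0 - q * x 1] ![y 1, y 0 - q * y 1] = _
  simp [det2]
  ring

lemma index_latticeOf_aux : ∀ n : ℕ, ∀ x y : Fin 2 → ℤ, (x 1).natAbs ≤ n → det2 x y ≠ 0 →
    (latticeOf x y).index = (det2 x y).natAbs := by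
  intro n
  induction n with
  | zero => exact fun x y h hd => index_triangular x y (by omega) hd
  | succ n ih =>
    intro x y h hd
    by_cases h0 : x 1 = 0
    · exact index_triangular x y h0 hd
    · obtain ⟨q, r, hqr, hr0, hrlt⟩ := div_small_rem (x 0) (x 1) h0
      have key : (latticeOf x y).index
          = (latticeOf (euclidEquiv q x) (euclidEquiv q y)).index := by
        have := latticeOf_map ((euclidEquiv q).toAddMonoidHom) x y
        rw [show ((euclidEquiv q).toAddMonoidHom) x = (euclidEquiv q) x from rfl,
          show ((euclidEquiv q).toAddMonoidHom) y = (euclidEquiv q) y from rfl] at this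
        rw [← this, index_map_addequiv]
      have hx1 : ((euclidEquiv q x) 1).natAbs ≤ n := by
        show ((![x 1, x 0 - q * x 1] : Fin 2 → ℤ) 1).natAbs ≤ n
        simp only [Matrix.cons_val_one, Matrix.head_cons, Matrix.cons_val_zero]
        have : x 0 - q * x 1 = r := by linarith [hqr]
        rw [this]; omega
      have hd' : det2 (euclidEquiv q x) (euclidEquiv q y) ≠ 0 := by
        rw [euclidEquiv_det]; exact neg_ne_zero.mpr hd
      rw [key, ih _ _ hx1 hd', euclidEquiv_det, Int.natAbs_neg]

lemma index_latticeOf (x y : Fin 2 → ℤ) (hd : det2 x y ≠ 0) :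
    (latticeOf x y).index = (det2 x y).natAbs :=
  index_latticeOf_aux (x 1).natAbs x y le_rfl hd

def fmap : (Fin 2 → ℤ) →+ (Fin 2 → ℤ) where
  toFun x := ![x 0 - x 1, x 0 + x 1]
  map_zero' := by funext i; fin_cases i <;> simp
  map_add' a b := by funext i; fin_cases i <;> (simp [Pi.add_apply]; ring)

lemma fmap_apply (x : Fin 2 → ℤ) : fmap x = ![x 0 - x 1, x 0 + x 1] := rfl

lemma fmap_normSq (x : Fin 2 → ℤ) : normSq2 (fmap x) = 2 * normSq2 x := by
  rw [fmap_apply]; simp [normSq2]; ring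

lemma fmap_det (x y : Fin 2 → ℤ) : det2 (fmap x) (fmap y) = 2 * det2 x y := by
  rw [fmap_apply, fmap_apply]; simp [det2]; ring

lemma fmap_inj : Function.Injective fmap := by
  intro a b hab
  have h0 := congrFun hab 0
  have h1 := congrFun hab 1
  rw [fmap_apply, fmap_apply] at h0 h1
  simp at h0 h1
  funext i; fin_cases i <;> simp <;> omega

lemma fmap_range {v : Fin 2 → ℤ} : v ∈ fmap.range ↔ (2:ℤ) ∣ (v 0 + v 1) := by
  constructor
  · rintro ⟨w, rfl⟩
    rw [fmap_apply]
    exact ⟨w 0, by simp; ring⟩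
  · rintro ⟨k, hk⟩
    refine ⟨![k, v 1 - k], ?_⟩
    rw [fmap_apply]
    funext i; fin_cases i <;> simp <;> omega

lemma fmap_range_index : fmap.range.index = 2 := by
  have : fmap.range = (lmod 2 1 1).ker := by
    ext v
    rw [fmap_range, AddMonoidHom.mem_ker]
    have hval : lmod 2 1 1 v = ((v 0 + v 1 : ℤ) : ZMod 2) := by
      show ((1 * v 0 + 1 * v 1 : ℤ) : ZMod 2) = _
      congr 1; ring
    rw [hval, ZMod.intCast_zmod_eq_zero_iff_dvd]
    norm_num
  rw [this, lmod_ker_index _ _ _ (lmod_surj_left _ _)]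

lemma fmap_ne_zero {w : Fin 2 → ℤ} (hw : w ≠ 0) : fmap w ≠ 0 := by
  intro h
  exact hw (fmap_inj (by rw [h, map_zero]))

lemma minvec_map {Λ : AddSubgroup (Fin 2 → ℤ)} {w : Fin 2 → ℤ} (h : IsMinVec Λ w) :
    IsMinVec (Λ.map fmap) (fmap w) := by
  refine ⟨AddSubgroup.mem_map.mpr ⟨w, h.1, rfl⟩, fmap_ne_zero h.2.1, ?_⟩
  intro z hz hz0
  obtain ⟨w', hw', rfl⟩ := AddSubgroup.mem_map.mp hz
  have hw'0 : w' ≠ 0 := by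
    intro hh; rw [hh, map_zero] at hz0; exact hz0 rfl
  rw [fmap_normSq, fmap_normSq]
  have := h.2.2 w' hw' hw'0
  omega

lemma minvec_comap {Λ : AddSubgroup (Fin 2 → ℤ)} {w : Fin 2 → ℤ}
    (h : IsMinVec (Λ.map fmap) (fmap w)) : IsMinVec Λ w := by
  obtain ⟨w'', hw'', hww⟩ := AddSubgroup.mem_map.mp h.1
  have hwΛ : w ∈ Λ := by rwa [fmap_inj hww] at hw''
  refine ⟨hwΛ, ?_, ?_⟩
  · intro hh; rw [hh, map_zero] at h; exact h.2.1 rfl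
  · intro z hz hz0
    have := h.2.2 (fmap z) (AddSubgroup.mem_map.mpr ⟨z, hz, rfl⟩) (fmap_ne_zero hz0)
    rw [fmap_normSq, fmap_normSq] at this
    omega

lemma wr_map_iff {Λ : AddSubgroup (Fin 2 → ℤ)} :
    IsWellRounded (Λ.map fmap) ↔ IsWellRounded Λ := by
  constructor
  · rintro ⟨x, y, hx, hy, hd⟩
    obtain ⟨x', hx', rfl⟩ := AddSubgroup.mem_map.mp hx.1
    obtain ⟨y', hy', rfl⟩ := AddSubgroup.mem_map.mp hy.1
    refine ⟨x', y', minvec_comap hx, minvec_comap hy, ?_⟩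
    rw [fmap_det] at hd
    intro hh; rw [hh] at hd; simp at hd
  · rintro ⟨x, y, hx, hy, hd⟩
    exact ⟨fmap x, fmap y, minvec_map hx, minvec_map hy, by rw [fmap_det]; omega⟩

lemma fr_map_iff {Λ : AddSubgroup (Fin 2 → ℤ)} :
    IsFullRank (Λ.map fmap) ↔ IsFullRank Λ := by
  constructor
  · rintro ⟨x, hx, y, hy, hd⟩
    obtain ⟨x', hx', rfl⟩ := AddSubgroup.mem_map.mp hx
    obtain ⟨y', hy', rfl⟩ := AddSubgroup.mem_map.mp hy
    refine ⟨x', hx', y', hy', ?_⟩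
    rw [fmap_det] at hd
    intro hh; rw [hh] at hd; simp at hd
  · rintro ⟨x, hx, y, hy, hd⟩
    exact ⟨fmap x, AddSubgroup.mem_map.mpr ⟨x, hx, rfl⟩,
      fmap y, AddSubgroup.mem_map.mpr ⟨y, hy, rfl⟩, by rw [fmap_det]; omega⟩


/-- `𝒩(u)`: the number of full-rank well-rounded sublattices of `ℤ²` with
determinant (index in `ℤ²`) equal to `u`. -/
noncomputable def NWR (u : ℕ) : ℕ :=
  {Λ : AddSubgroup (Fin 2 → ℤ) | IsFullRank Λ ∧ IsWellRounded Λ ∧ Λ.index = u}.ncard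

/-- If `u` is an odd positive integer, then `𝒩(u) = 𝒩(2u)`. -/
theorem stmt15 (u : ℕ) (hu : 0 < u) (hodd : Odd u) : NWR u = NWR (2 * u) := by
  have himg : (AddSubgroup.map fmap) ''
      {Λ : AddSubgroup (Fin 2 → ℤ) | IsFullRank Λ ∧ IsWellRounded Λ ∧ Λ.index = u}
      = {Λ : AddSubgroup (Fin 2 → ℤ) | IsFullRank Λ ∧ IsWellRounded Λ ∧ Λ.index = 2 * u} := by
    ext M
    constructor
    · rintro ⟨Λ, ⟨hFR, hWR, hidx⟩, rfl⟩
      refine ⟨fr_map_iff.mpr hFR, wr_map_iff.mpr hWR, ?_⟩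
      rw [AddSubgroup.index_map_of_injective _ fmap_inj, fmap_range_index, hidx]
      ring
    · rintro ⟨hFR, hWR, hidx⟩
      obtain ⟨x, y, hx, hy, hd⟩ := hWR
      have hM : M = latticeOf x y := minvec_generate hx hy hd
      have hidx' : (det2 x y).natAbs = 2 * u := by
        rw [← index_latticeOf x y hd, ← hM, hidx]
      -- normSq2 x is even
      have hEven : Even (normSq2 x) := by
        by_contra hodd'
        rw [Int.not_even_iff_odd] at hodd'
        have heq : x 0 ^ 2 + x 1 ^ 2 = y 0 ^ 2 + y 1 ^ 2 := minvec_normSq_eq hx hy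
        refine parity_lemma heq hodd' ?_
        obtain ⟨v, hv⟩ := hodd
        rcases Int.natAbs_eq (det2 x y) with he | he <;>
          rw [hidx'] at he
        · exact ⟨v, by unfold det2 at he; push_cast at he; omega⟩
        · exact ⟨-v - 1, by unfold det2 at he; push_cast at he; omega⟩
      have hEveny : Even (normSq2 y) := by rwa [minvec_normSq_eq hx hy] at hEven
      have hparity : ∀ z : Fin 2 → ℤ, Even (normSq2 z) → z ∈ fmap.range := by
        intro z hz
        rw [fmap_range]
        unfold normSq2 at hz
        have h0 : Even (z 0 ^ 2) ↔ Even (z 0) := by rw [Int.even_pow]; simp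
        have h1 : Even (z 1 ^ 2) ↔ Even (z 1) := by rw [Int.even_pow]; simp
        have := Int.even_add.mp hz
        have : Even (z 0 + z 1) := Int.even_add.mpr (by tauto)
        obtain ⟨k, hk⟩ := this
        exact ⟨k, by omega⟩
      have hle : M ≤ fmap.range := by
        rw [hM]
        refine (AddSubgroup.closure_le _).mpr ?_
        rintro v (h | h)
        · rw [h]; exact hparity x hEven
        · rw [Set.mem_singleton_iff] at h; rw [h]; exact hparity y hEveny
      have hMeq : AddSubgroup.map fmap (AddSubgroup.comap fmap M) = M := by
        rw [AddSubgroup.map_comap_eq, inf_eq_right.mpr hle]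
      refine ⟨AddSubgroup.comap fmap M, ⟨?_, ?_, ?_⟩, hMeq⟩
      · rw [← fr_map_iff, hMeq]; exact hFR
      · rw [← wr_map_iff, hMeq]; exact ⟨x, y, hx, hy, hd⟩
      · have := AddSubgroup.index_map_of_injective (AddSubgroup.comap fmap M) fmap_inj
        rw [hMeq, fmap_range_index, hidx] at this
        omega
  calc NWR u = ((AddSubgroup.map fmap) ''
      {Λ : AddSubgroup (Fin 2 → ℤ) | IsFullRank Λ ∧ IsWellRounded Λ ∧ Λ.index = u}).ncard :=
        (Set.ncard_image_of_injective _ (AddSubgroup.map_injective fmap_inj)).symm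
    _ = NWR (2 * u) := by rw [himg]; rfl
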